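/- arXiv:1506.00738 — 7 statements merged into one kernel-verified Lean document; each statement's English description precedes it below -/
import Mathlib

section
/- Let M, P be real symmetric n×n matrices with P - M positive definite, and define the quadratic basis φ(x,z) = ½(x−z)ᵀM(x−z) and ψ(x) = ½xᵀPx. Then the semiconvex dual a(z) = −sup_{x∈ℝⁿ} (φ(x,z) − ψ(x)) is given by a(z) = ½ zᵀ Υ(P) z where Υ(P) = −M − M(P−M)⁻¹M. -/
/-!
With `Q = P - M` and `w = Q⁻¹ M z`, completing the square gives
`φ(x,z) - ψ(x) = ½ zᵀ(M + M Q⁻¹ M)z - ½ (x + w)ᵀ Q (x + w)`.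
As `Q` is positive definite, the last term is nonnegative and vanishes at `x = -w`,
so the supremum is `½ zᵀ(M + M Q⁻¹ M)z`.
-/

open Matrix

section CompletingTheSquare

variable {ι R : Type*} [Fintype ι] [CommRing R]

lemma dotProduct_mulVec_comm_of_transpose_eq {A : Matrix ι ι R} (hA : Aᵀ = A) (u v : ι → R) :
    u ⬝ᵥ (A *ᵥ v) = v ⬝ᵥ (A *ᵥ u) := by
  rw [dotProduct_mulVec, ← mulVec_transpose, hA, dotProduct_comm]

lemma add_inv_mulVec_dotProduct_mulVec [DecidableEq ι] {Q : Matrix ι ι R} (hQ : Qᵀ = Q)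
    (hdet : IsUnit Q.det) (x b : ι → R) :
    (x + Q⁻¹ *ᵥ b) ⬝ᵥ (Q *ᵥ (x + Q⁻¹ *ᵥ b)) =
      x ⬝ᵥ (Q *ᵥ x) + 2 * (x ⬝ᵥ b) + b ⬝ᵥ (Q⁻¹ *ᵥ b) := by
  have hb : Q *ᵥ (Q⁻¹ *ᵥ b) = b := by rw [mulVec_mulVec, mul_nonsing_inv _ hdet, one_mulVec]
  have hcross : (Q⁻¹ *ᵥ b) ⬝ᵥ (Q *ᵥ x) = x ⬝ᵥ b := by
    rw [dotProduct_mulVec_comm_of_transpose_eq hQ, hb]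
  rw [mulVec_add, dotProduct_add, add_dotProduct, add_dotProduct, hb, hcross,
    dotProduct_comm (Q⁻¹ *ᵥ b) b]
  ring

lemma sub_dotProduct_mulVec_sub_sub_eq_sub_square [DecidableEq ι] {M P : Matrix ι ι R}
    (hM : Mᵀ = M) (hPM : (P - M)ᵀ = P - M) (hdet : IsUnit (P - M).det) (x z : ι → R) :
    (x - z) ⬝ᵥ (M *ᵥ (x - z)) - x ⬝ᵥ (P *ᵥ x) =
      z ⬝ᵥ ((M + M * (P - M)⁻¹ * M) *ᵥ z) -
        (x + (P - M)⁻¹ *ᵥ (M *ᵥ z)) ⬝ᵥ ((P - M) *ᵥ (x + (P - M)⁻¹ *ᵥ (M *ᵥ z))) := by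
  set v := (P - M)⁻¹ *ᵥ (M *ᵥ z)
  have hzv : z ⬝ᵥ (M *ᵥ v) = (M *ᵥ z) ⬝ᵥ v := by
    rw [dotProduct_mulVec_comm_of_transpose_eq hM, dotProduct_comm]
  have hzx : z ⬝ᵥ (M *ᵥ x) = x ⬝ᵥ (M *ᵥ z) := dotProduct_mulVec_comm_of_transpose_eq hM z x
  rw [add_inv_mulVec_dotProduct_mulVec hPM hdet, add_mulVec, ← mulVec_mulVec, ← mulVec_mulVec,
    dotProduct_add, hzv]
  simp only [mulVec_sub, sub_mulVec, dotProduct_sub, sub_dotProduct, hzx]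
  ring

end CompletingTheSquare

lemma ciSup_const_sub_eq {ι : Type*} {f : ι → ℝ} (c : ℝ) (hf : ∀ i, 0 ≤ f i) {i₀ : ι}
    (hi₀ : f i₀ = 0) : ⨆ i, (c - f i) = c := by
  have : Nonempty ι := ⟨i₀⟩
  refine le_antisymm (ciSup_le fun i ↦ by linarith [hf i]) ?_
  have hbdd : BddAbove (Set.range fun i ↦ c - f i) := by
    refine ⟨c, ?_⟩
    rintro _ ⟨i, rfl⟩
    linarith [hf i]
  exact le_ciSup_of_le hbdd i₀ (by rw [hi₀, sub_zero])

theorem semiconvex_dual_of_quadratic_general {n : ℕ}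
    (M P : Matrix (Fin n) (Fin n) ℝ)
    (hM : Mᵀ = M)
    (hPM : (P - M).PosDef) :
    ∀ z : Fin n → ℝ,
      -(⨆ x : Fin n → ℝ,
          (1/2 : ℝ) * ((x - z) ⬝ᵥ (M *ᵥ (x - z))) - (1/2 : ℝ) * (x ⬝ᵥ (P *ᵥ x)))
        = (1/2 : ℝ) * (z ⬝ᵥ ((-M - M * (P - M)⁻¹ * M) *ᵥ z)) := by
  intro z
  have hsymm : (P - M)ᵀ = P - M := (isHermitian_iff_isSymm.mp hPM.isHermitian).eq
  have hdet : IsUnit (P - M).det := (isUnit_iff_isUnit_det _).mp hPM.isUnit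
  set w := (P - M)⁻¹ *ᵥ (M *ᵥ z)
  have hsquare : ∀ x : Fin n → ℝ,
      (1/2 : ℝ) * ((x - z) ⬝ᵥ (M *ᵥ (x - z))) - (1/2 : ℝ) * (x ⬝ᵥ (P *ᵥ x)) =
        (1/2 : ℝ) * (z ⬝ᵥ ((M + M * (P - M)⁻¹ * M) *ᵥ z)) -
          (1/2 : ℝ) * ((x + w) ⬝ᵥ ((P - M) *ᵥ (x + w))) := fun x ↦ by
    rw [← mul_sub, ← mul_sub, sub_dotProduct_mulVec_sub_sub_eq_sub_square hM hsymm hdet]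
  have hnonneg (x : Fin n → ℝ) : 0 ≤ (1/2 : ℝ) * ((x + w) ⬝ᵥ ((P - M) *ᵥ (x + w))) := by
    have := hPM.posSemidef.dotProduct_mulVec_nonneg (x + w)
    simp only [star_trivial] at this
    positivity
  rw [iSup_congr hsquare, ciSup_const_sub_eq _ hnonneg (i₀ := -w) (by simp),
    sub_eq_add_neg (-M), ← neg_add, neg_mulVec, dotProduct_neg, mul_neg]

/-- Semiconvex dual of a quadratic `ψ(x) = ½xᵀPx` with respect to the basis
`φ(x,z) = ½(x−z)ᵀM(x−z)`: `a(z) = −sup_x (φ(x,z) − ψ(x)) = ½ zᵀ Υ(P) z` with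
`Υ(P) = −M − M(P−M)⁻¹M`. -/
theorem semiconvex_dual_of_quadratic {n : ℕ}
    (M P : Matrix (Fin n) (Fin n) ℝ)
    (hM : Mᵀ = M) (hP : Pᵀ = P)
    (hPM : (P - M).PosDef) :
    ∀ z : Fin n → ℝ,
      -(⨆ x : Fin n → ℝ,
          (1/2 : ℝ) * ((x - z) ⬝ᵥ (M *ᵥ (x - z))) - (1/2 : ℝ) * (x ⬝ᵥ (P *ᵥ x)))
        = (1/2 : ℝ) * (z ⬝ᵥ ((-M - M * (P - M)⁻¹ * M) *ᵥ z)) :=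
  semiconvex_dual_of_quadratic_general M P hM hPM
end

section
/- Let M be an invertible real symmetric n×n matrix. Define Υ(P) = −M − M(P−M)⁻¹M on symmetric matrices P with P − M positive definite, and Υ⁻¹(R) = M − M(R+M)⁻¹M on symmetric matrices R with R + M negative definite. Then for every symmetric P with P − M positive definite: (i) Υ(P) + M is negative definite, and (ii) Υ⁻¹(Υ(P)) = P. -/
/-!
`Υ(P) + M = -M (P - M)⁻¹ M` is, up to sign, the congruence of the positive definite matrix
`(P - M)⁻¹` by the symmetric invertible `M`, hence negative definite; inverting it and
conjugating by `M` again gives back `-(P - M)`, so `Υ⁻¹(Υ(P)) = M + (P - M) = P`.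
-/

open Matrix

namespace Matrix

variable {n α : Type*} [Fintype n] [DecidableEq n] [CommRing α]

protected theorem inv_neg (A : Matrix n n α) : (-A)⁻¹ = -A⁻¹ := by
  by_cases hA : IsUnit A.det
  · exact inv_eq_right_inv (by rw [neg_mul_neg, mul_nonsing_inv A hA])
  · have hnegA : ¬IsUnit (-A).det := by
      rwa [det_neg, IsUnit.mul_iff, and_iff_right (isUnit_neg_one.pow _)]
    rw [nonsing_inv_apply_not_isUnit A hA, nonsing_inv_apply_not_isUnit _ hnegA, neg_zero]

theorem mul_inv_mul_mul_cancel {A M N : Matrix n n α} (hM : IsUnit M.det) (hN : IsUnit N.det) :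
    M * (N * A * M)⁻¹ * N = A⁻¹ := by
  rw [mul_inv_rev, mul_inv_rev, ← Matrix.mul_assoc, ← Matrix.mul_assoc, mul_nonsing_inv M hM,
    Matrix.one_mul, Matrix.mul_assoc, nonsing_inv_mul N hN, Matrix.mul_one]

end Matrix

theorem Upsilon_maps_into_and_inverse_general {n : ℕ}
    (M P : Matrix (Fin n) (Fin n) ℝ)
    (hM : Mᵀ = M) (hMinv : IsUnit M)
    (hPM : (P - M).PosDef) :
    (-((-M - M * (P - M)⁻¹ * M) + M)).PosDef ∧
      M - M * ((-M - M * (P - M)⁻¹ * M) + M)⁻¹ * M = P := by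
  have hMdet : IsUnit M.det := (isUnit_iff_isUnit_det M).mp hMinv
  have hPMdet : IsUnit (P - M).det := (isUnit_iff_isUnit_det _).mp hPM.isUnit
  have hΥ : (-M - M * (P - M)⁻¹ * M) + M = -(M * (P - M)⁻¹ * M) := by abel
  rw [hΥ, neg_neg, Matrix.inv_neg, mul_neg, neg_mul, sub_neg_eq_add,
    mul_inv_mul_mul_cancel hMdet hMdet, nonsing_inv_nonsing_inv _ hPMdet]
  refine ⟨?_, add_sub_cancel M P⟩
  have hMH : Mᴴ = M := (conjTranspose_eq_transpose_of_trivial M).trans hM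
  simpa only [hMH] using
    hPM.inv.conjTranspose_mul_mul_same (mulVec_injective_iff_isUnit.mpr hMinv)

/-- For `M` symmetric invertible and `P` symmetric with `P − M ≻ 0`,
`Υ(P) = −M − M(P−M)⁻¹M` satisfies `Υ(P) + M ≺ 0` and `Υ⁻¹(Υ(P)) = P`
where `Υ⁻¹(R) = M − M(R+M)⁻¹M`. -/
theorem Upsilon_maps_into_and_inverse {n : ℕ}
    (M P : Matrix (Fin n) (Fin n) ℝ)
    (hM : Mᵀ = M) (hMinv : IsUnit M)
    (hP : Pᵀ = P) (hPM : (P - M).PosDef) :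
    (-((-M - M * (P - M)⁻¹ * M) + M)).PosDef ∧
      M - M * ((-M - M * (P - M)⁻¹ * M) + M)⁻¹ * M = P :=
  Upsilon_maps_into_and_inverse_general M P hM hMinv hPM
end

section
/- Let A, B, C be real matrices of sizes n×n, n×m, p×n, and let P, P̃ : [0,T] → Sym(n,ℝ) be differentiable solutions of the differential Riccati equation Ṗ_t = AᵀP_t + P_tA + P_tBBᵀP_t + CᵀC on [0,T]. If P₀ − P̃₀ is negative semidefinite, then P_t − P̃_t is negative semidefinite for all t ∈ [0,T]. -/
/-!
The difference `D = P̃ - P` of two solutions solves the linear equation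
`Ḋ = (Aᵀ + P B Bᵀ) D + D (A + B Bᵀ P̃)`, so it suffices to show that a linear flow
`Ḋ = N D + D M` of symmetric matrices preserves positive semidefiniteness.

Let `L` bound the quadratic form of `N + M` on `[a, b]` and fix `ε > 0`. Suppose that
`D t + ε e^{L (t - a)} I` fails to be positive definite somewhere, and let `c` be the first such
time. There it is still positive semidefinite, so it has a null vector `x`, an eigenvector of
`D c` with eigenvalue `-ε e^{L (c - a)}`. The quadratic form `xᵀ(D t + ε e^{L (t - a)} I)x` is
positive before `c` and vanishes at `c`, so its derivative at `c` is `≤ 0`; but the equation makes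
that derivative `ε e^{L (c - a)} (L |x|² - xᵀ(N + M)x) > 0`. Letting `ε → 0` gives the claim.
-/

open Matrix Set Filter Topology

theorem exists_pos_mem_sphere_eq_smul {E : Type*} [NormedAddCommGroup E] [NormedSpace ℝ E]
    {x : E} (hx : x ≠ 0) : ∃ r : ℝ, 0 < r ∧ ∃ u ∈ Metric.sphere (0 : E) 1, x = r • u :=
  ⟨‖x‖, norm_pos_iff.2 hx, ‖x‖⁻¹ • x, mem_sphere_zero_iff_norm.2 (norm_smul_inv_norm hx),
    by rw [smul_smul, mul_inv_cancel₀ (norm_ne_zero_iff.2 hx), one_smul]⟩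

-- `n → ℝ` carries the sup norm, so this is an inequality.
theorem one_le_dotProduct_self_of_mem_sphere {n : Type*} [Fintype n] {u : n → ℝ}
    (hu : u ∈ Metric.sphere (0 : n → ℝ) 1) : 1 ≤ u ⬝ᵥ u := by
  have hnorm : ‖u‖ ≤ √(u ⬝ᵥ u) := by
    refine (pi_norm_le_iff_of_nonneg (Real.sqrt_nonneg _)).2 fun i => Real.abs_le_sqrt ?_
    rw [sq]
    exact Finset.single_le_sum (f := fun j => u j * u j) (fun j _ => mul_self_nonneg (u j))
      (Finset.mem_univ i)
  rwa [mem_sphere_zero_iff_norm.1 hu, Real.one_le_sqrt] at hnorm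

theorem HasDerivAt.nonpos_of_eventually_le_nhdsLT {f : ℝ → ℝ} {f' c : ℝ}
    (hf : HasDerivAt f f' c) (h : ∀ᶠ s in 𝓝[<] c, f c ≤ f s) : f' ≤ 0 := by
  have hslope : Tendsto (slope f c) (𝓝[<] c) (𝓝 f') :=
    (hasDerivAt_iff_tendsto_slope.1 hf).mono_left (nhdsWithin_mono _ fun s hs => ne_of_lt hs)
  refine le_of_tendsto hslope ?_
  filter_upwards [h, self_mem_nhdsWithin] with s hfs hs
  rw [slope_def_field]
  exact div_nonpos_iff.2 (Or.inl ⟨sub_nonneg.2 hfs, (sub_neg.2 hs).le⟩)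

namespace Matrix

theorem continuousAt_of_hasDerivAt_apply {m n : Type*} {Q : ℝ → Matrix m n ℝ}
    {Q' : Matrix m n ℝ} {t : ℝ} (hQ : ∀ i j, HasDerivAt (fun s => Q s i j) (Q' i j) t) :
    ContinuousAt Q t :=
  continuousAt_pi.2 fun i => continuousAt_pi.2 fun j => (hQ i j).continuousAt

theorem riccati_sub_riccati {n m R : Type*} [Fintype n] [Fintype m] [Ring R]
    (A : Matrix n n R) (B : Matrix n m R) (Q X Y : Matrix n n R) :
    (Aᵀ * X + X * A + X * B * Bᵀ * X + Q) - (Aᵀ * Y + Y * A + Y * B * Bᵀ * Y + Q) =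
      (Aᵀ + Y * B * Bᵀ) * (X - Y) + (X - Y) * (A + B * Bᵀ * X) := by
  simp only [Matrix.mul_sub, Matrix.sub_mul, Matrix.mul_add, Matrix.add_mul, Matrix.mul_assoc]
  abel

section Quadratic

variable {n : Type*} [Fintype n]

theorem isClosed_setOf_posSemidef : IsClosed {M : Matrix n n ℝ | M.PosSemidef} := by
  simp only [posSemidef_iff_dotProduct_mulVec, star_trivial, ofPred_and, ofPred_forall]
  refine .inter (isClosed_eq continuous_id.matrix_conjTranspose continuous_id)
    (isClosed_iInter fun x => isClosed_le continuous_const ?_)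
  exact continuous_const.dotProduct (continuous_id.matrix_mulVec continuous_const)

theorem PosSemidef.exists_ne_zero_mulVec_eq_zero {Q : Matrix n n ℝ} (hQ : Q.PosSemidef)
    (hQ' : ¬ Q.PosDef) : ∃ x ≠ 0, Q *ᵥ x = 0 := by
  simp only [posDef_iff_dotProduct_mulVec, hQ.isHermitian, star_trivial, true_and, not_forall,
    not_lt] at hQ'
  obtain ⟨x, hx0, hx⟩ := hQ'
  refine ⟨x, hx0, (hQ.dotProduct_mulVec_zero_iff x).1 ?_⟩
  simpa using le_antisymm hx (by simpa using hQ.dotProduct_mulVec_nonneg x)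

theorem smul_dotProduct_mulVec_smul (Q : Matrix n n ℝ) (r : ℝ) (x : n → ℝ) :
    (r • x) ⬝ᵥ (Q *ᵥ (r • x)) = r ^ 2 * (x ⬝ᵥ (Q *ᵥ x)) := by
  rw [mulVec_smul, smul_dotProduct, dotProduct_smul, smul_eq_mul, smul_eq_mul]
  ring

theorem posDef_iff_forall_mem_sphere {Q : Matrix n n ℝ} (hQ : Q.IsHermitian) :
    Q.PosDef ↔ ∀ u ∈ Metric.sphere (0 : n → ℝ) 1, 0 < u ⬝ᵥ (Q *ᵥ u) := by
  simp only [posDef_iff_dotProduct_mulVec, star_trivial, hQ, true_and]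
  refine ⟨fun h u hu => h (ne_zero_of_mem_unit_sphere ⟨u, hu⟩), fun h x hx => ?_⟩
  obtain ⟨r, hr, u, hu, rfl⟩ := exists_pos_mem_sphere_eq_smul hx
  rw [smul_dotProduct_mulVec_smul]
  exact mul_pos (by positivity) (h u hu)

theorem continuousOn_dotProduct_mulVec {X : Type*} [TopologicalSpace X] {G : X → Matrix n n ℝ}
    {s : Set X} (hG : ContinuousOn G s) :
    ContinuousOn (fun p : X × (n → ℝ) => p.2 ⬝ᵥ (G p.1 *ᵥ p.2)) (s ×ˢ univ) := by
  have hq : Continuous fun p : Matrix n n ℝ × (n → ℝ) => p.2 ⬝ᵥ (p.1 *ᵥ p.2) :=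
    continuous_snd.dotProduct (continuous_fst.matrix_mulVec continuous_snd)
  exact hq.comp_continuousOn (hG.prodMap continuousOn_id)

theorem exists_forall_dotProduct_mulVec_lt {X : Type*} [TopologicalSpace X]
    {G : X → Matrix n n ℝ} {s : Set X} (hs : IsCompact s) (hG : ContinuousOn G s) :
    ∃ L, ∀ t ∈ s, ∀ x ≠ 0, x ⬝ᵥ (G t *ᵥ x) < L * (x ⬝ᵥ x) := by
  obtain ⟨C, hC⟩ := (hs.prod (isCompact_sphere (0 : n → ℝ) 1)).exists_bound_of_continuousOn
    ((continuousOn_dotProduct_mulVec hG).mono (prod_mono subset_rfl (subset_univ _)))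
  refine ⟨max C 0 + 1, fun t ht x hx => ?_⟩
  obtain ⟨r, hr, u, hu, rfl⟩ := exists_pos_mem_sphere_eq_smul hx
  have hCu : u ⬝ᵥ (G t *ᵥ u) ≤ max C 0 :=
    ((le_abs_self _).trans (hC (t, u) ⟨ht, hu⟩)).trans (le_max_left _ _)
  have hu1 := one_le_dotProduct_self_of_mem_sphere hu
  have hself : (r • u) ⬝ᵥ (r • u) = r ^ 2 * (u ⬝ᵥ u) := by
    rw [smul_dotProduct, dotProduct_smul, smul_eq_mul, smul_eq_mul]
    ring
  rw [smul_dotProduct_mulVec_smul, hself]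
  have hC0 := le_max_right C 0
  have hr2 := pow_pos hr 2
  calc r ^ 2 * (u ⬝ᵥ (G t *ᵥ u)) ≤ r ^ 2 * (max C 0 * (u ⬝ᵥ u)) := by gcongr; nlinarith
    _ < (max C 0 + 1) * (r ^ 2 * (u ⬝ᵥ u)) := by nlinarith

theorem exists_first_not_posDef {Q : ℝ → Matrix n n ℝ} {a b : ℝ} (hQ : ContinuousOn Q (Icc a b))
    (hherm : ∀ t ∈ Icc a b, (Q t).IsHermitian) (hbad : ∃ t ∈ Icc a b, ¬ (Q t).PosDef) :
    ∃ c ∈ Icc a b, ¬ (Q c).PosDef ∧ ∀ s ∈ Ico a c, (Q s).PosDef := by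
  set bad := Icc a b ×ˢ Metric.sphere (0 : n → ℝ) 1 ∩
    (fun p : ℝ × (n → ℝ) => p.2 ⬝ᵥ (Q p.1 *ᵥ p.2)) ⁻¹' Iic 0
  have hmem : ∀ t ∈ Icc a b, ¬ (Q t).PosDef ↔ t ∈ Prod.fst '' bad := by
    intro t ht
    simp [posDef_iff_forall_mem_sphere (hherm t ht), bad, ht.1, ht.2]
  have hcompact : IsCompact (Prod.fst '' bad) := by
    refine IsCompact.image ?_ continuous_fst
    refine (isCompact_Icc.prod (isCompact_sphere 0 1)).of_isClosed_subset ?_ inter_subset_left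
    exact ((continuousOn_dotProduct_mulVec hQ).mono (prod_mono subset_rfl (subset_univ _)))
      |>.preimage_isClosed_of_isClosed (isClosed_Icc.prod Metric.isClosed_sphere) isClosed_Iic
  obtain ⟨t, ht, htbad⟩ := hbad
  obtain ⟨c, hc, hleast⟩ := hcompact.exists_isLeast ⟨t, (hmem t ht).1 htbad⟩
  have hcIcc : c ∈ Icc a b := by
    obtain ⟨p, hp, rfl⟩ := hc
    exact hp.1.1
  refine ⟨c, hcIcc, (hmem c hcIcc).2 hc, fun s hs => ?_⟩
  by_contra h
  exact (hleast ((hmem s ⟨hs.1, hs.2.le.trans hcIcc.2⟩).1 h)).not_gt hs.2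

theorem hasDerivAt_dotProduct_mulVec {Q : ℝ → Matrix n n ℝ} {Q' : Matrix n n ℝ} {t : ℝ}
    (hQ : ∀ i j, HasDerivAt (fun s => Q s i j) (Q' i j) t) (x : n → ℝ) :
    HasDerivAt (fun s => x ⬝ᵥ (Q s *ᵥ x)) (x ⬝ᵥ (Q' *ᵥ x)) t := by
  simp only [dotProduct, mulVec]
  exact HasDerivAt.fun_sum fun i _ =>
    (HasDerivAt.fun_sum fun j _ => (hQ i j).mul_const (x j)).const_mul (x i)

theorem dotProduct_mul_add_mul_mulVec_of_mulVec_eq_smul {D N M : Matrix n n ℝ}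
    (hD : D.IsHermitian) {x : n → ℝ} {μ : ℝ} (hx : D *ᵥ x = μ • x) :
    x ⬝ᵥ ((N * D + D * M) *ᵥ x) = μ * (x ⬝ᵥ ((N + M) *ᵥ x)) := by
  have hxD : x ᵥ* D = μ • x := by
    rw [← hx, ← vecMul_transpose, (isHermitian_iff_isSymm.1 hD).eq]
  rw [add_mulVec, add_mulVec, ← mulVec_mulVec, ← mulVec_mulVec, hx, dotProduct_add,
    dotProduct_add, dotProduct_mulVec x D, hxD, mulVec_smul, dotProduct_smul, smul_dotProduct,
    smul_eq_mul, smul_eq_mul]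
  ring

variable [DecidableEq n]

theorem dotProduct_add_smul_one_mulVec (D : Matrix n n ℝ) (r : ℝ) (x : n → ℝ) :
    x ⬝ᵥ ((D + r • 1) *ᵥ x) = x ⬝ᵥ (D *ᵥ x) + r * (x ⬝ᵥ x) := by
  rw [add_mulVec, smul_mulVec, one_mulVec, dotProduct_add, dotProduct_smul, smul_eq_mul]

end Quadratic

section LinearFlow

variable {n : Type*} [Fintype n] [DecidableEq n] {D N M : ℝ → Matrix n n ℝ} {a b : ℝ}

theorem posDef_add_exp_smul_one {L ε : ℝ} (hε : 0 < ε)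
    (hD : ∀ t ∈ Icc a b, ∀ i j, HasDerivAt (fun s => D s i j) ((N t * D t + D t * M t) i j) t)
    (hherm : ∀ t ∈ Icc a b, (D t).IsHermitian)
    (hL : ∀ t ∈ Icc a b, ∀ x ≠ 0, x ⬝ᵥ ((N t + M t) *ᵥ x) < L * (x ⬝ᵥ x))
    (ha : (D a).PosSemidef) :
    ∀ t ∈ Icc a b, (D t + (ε * Real.exp (L * (t - a))) • 1).PosDef := by
  set w : ℝ → ℝ := fun t => ε * Real.exp (L * (t - a)) with hw
  set Q : ℝ → Matrix n n ℝ := fun t => D t + w t • 1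
  have hw_pos : ∀ t, 0 < w t := fun t => by positivity
  have hw_deriv : ∀ t, HasDerivAt w (w t * L) t := fun t =>
    ((((hasDerivAt_id t).sub_const a).const_mul L).exp.const_mul ε).congr_deriv
      (by simp [hw]; ring)
  have hwI : ∀ t, (w t • (1 : Matrix n n ℝ)).PosDef := fun t => PosDef.one.smul (hw_pos t)
  have hQ_cont : ∀ t ∈ Icc a b, ContinuousAt Q t := fun t ht =>
    (continuousAt_of_hasDerivAt_apply (hD t ht)).add
      ((hw_deriv t).continuousAt.smul continuousAt_const)
  have hQ_herm : ∀ t ∈ Icc a b, (Q t).IsHermitian := fun t ht =>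
    (hherm t ht).add (hwI t).isHermitian
  by_contra! hbad
  obtain ⟨c, hc, hc_bad, hbefore⟩ :=
    exists_first_not_posDef (fun t ht => (hQ_cont t ht).continuousWithinAt) hQ_herm hbad
  have hac : a < c := by
    refine hc.1.lt_of_ne fun hac => hc_bad ?_
    subst hac
    exact PosDef.posSemidef_add ha (hwI _)
  have hleft : ∀ᶠ s in 𝓝[<] c, (Q s).PosDef := by
    filter_upwards [Ioo_mem_nhdsLT hac] with s hs using hbefore s ⟨hs.1.le, hs.2⟩
  have hQc : (Q c).PosSemidef :=
    isClosed_setOf_posSemidef.mem_of_tendsto ((hQ_cont c hc).tendsto.mono_left nhdsWithin_le_nhds)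
      (hleft.mono fun s hs => hs.posSemidef)
  obtain ⟨x, hx0, hker⟩ := hQc.exists_ne_zero_mulVec_eq_zero hc_bad
  have hDx : D c *ᵥ x = (-w c) • x := by
    rw [add_mulVec, smul_mulVec, one_mulVec] at hker
    rw [neg_smul]
    exact eq_neg_of_add_eq_zero_left hker
  have hf : HasDerivAt (fun s => x ⬝ᵥ (Q s *ᵥ x))
      (w c * (L * (x ⬝ᵥ x) - x ⬝ᵥ ((N c + M c) *ᵥ x))) c := by
    have h := (hasDerivAt_dotProduct_mulVec (hD c hc) x).add ((hw_deriv c).mul_const (x ⬝ᵥ x))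
    rw [dotProduct_mul_add_mul_mulVec_of_mulVec_eq_smul (hherm c hc) hDx] at h
    rw [funext fun s => dotProduct_add_smul_one_mulVec (D s) (w s) x]
    exact h.congr_deriv (by ring)
  have hf_nonpos := hf.nonpos_of_eventually_le_nhdsLT <| hleft.mono fun s hs => by
    rw [hker, dotProduct_zero]
    simpa using (hs.dotProduct_mulVec_pos hx0).le
  nlinarith [hw_pos c, hL c hc x hx0]

theorem posSemidef_of_hasDerivAt_mul_add_mul
    (hN : ContinuousOn N (Icc a b)) (hM : ContinuousOn M (Icc a b))
    (hD : ∀ t ∈ Icc a b, ∀ i j, HasDerivAt (fun s => D s i j) ((N t * D t + D t * M t) i j) t)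
    (hherm : ∀ t ∈ Icc a b, (D t).IsHermitian) (ha : (D a).PosSemidef) :
    ∀ t ∈ Icc a b, (D t).PosSemidef := by
  obtain ⟨L, hL⟩ := exists_forall_dotProduct_mulVec_lt isCompact_Icc (hN.add hM)
  intro t ht
  refine .of_dotProduct_mulVec_nonneg (hherm t ht) fun x => ?_
  set k := Real.exp (L * (t - a)) * (x ⬝ᵥ x)
  have hpos : ∀ ε > 0, 0 ≤ x ⬝ᵥ (D t *ᵥ x) + ε * k := fun ε hε => by
    have := (posDef_add_exp_smul_one hε hD hherm hL ha t ht).posSemidef.dotProduct_mulVec_nonneg x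
    rw [star_trivial, dotProduct_add_smul_one_mulVec] at this
    linarith
  have hlim : Tendsto (fun ε => x ⬝ᵥ (D t *ᵥ x) + ε * k) (𝓝[>] 0)
      (𝓝 (x ⬝ᵥ (D t *ᵥ x) + 0 * k)) :=
    tendsto_const_nhds.add (tendsto_nhdsWithin_of_tendsto_nhds (tendsto_id.mul_const k))
  rw [zero_mul, add_zero] at hlim
  simpa using ge_of_tendsto hlim (eventually_nhdsWithin_of_forall hpos)

end LinearFlow

end Matrix

theorem riccati_monotone_general {n m p : ℕ} (T : ℝ)
    (A : Matrix (Fin n) (Fin n) ℝ) (B : Matrix (Fin n) (Fin m) ℝ)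
    (C : Matrix (Fin p) (Fin n) ℝ)
    (P Ptil : ℝ → Matrix (Fin n) (Fin n) ℝ)
    (hPsym : ∀ t, (P t)ᵀ = P t) (hPtilsym : ∀ t, (Ptil t)ᵀ = Ptil t)
    (hP : ∀ t ∈ Set.Icc (0:ℝ) T, ∀ i j, HasDerivAt (fun s => P s i j)
      ((Aᵀ * P t + P t * A + P t * B * Bᵀ * P t + Cᵀ * C) i j) t)
    (hPtil : ∀ t ∈ Set.Icc (0:ℝ) T, ∀ i j, HasDerivAt (fun s => Ptil s i j)
      ((Aᵀ * Ptil t + Ptil t * A + Ptil t * B * Bᵀ * Ptil t + Cᵀ * C) i j) t)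
    (h0 : (Ptil 0 - P 0).PosSemidef) :
    ∀ t ∈ Set.Icc (0:ℝ) T, (Ptil t - P t).PosSemidef := by
  have hP_cont : ContinuousOn P (Icc 0 T) := fun t ht =>
    (continuousAt_of_hasDerivAt_apply (hP t ht)).continuousWithinAt
  have hPtil_cont : ContinuousOn Ptil (Icc 0 T) := fun t ht =>
    (continuousAt_of_hasDerivAt_apply (hPtil t ht)).continuousWithinAt
  refine posSemidef_of_hasDerivAt_mul_add_mul (N := fun t => Aᵀ + P t * B * Bᵀ)
    (M := fun t => A + B * Bᵀ * Ptil t)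
    ((continuous_const.add ((continuous_id.matrix_mul continuous_const).matrix_mul
      continuous_const)).comp_continuousOn hP_cont)
    ((continuous_const.add (continuous_const.matrix_mul continuous_id)).comp_continuousOn
      hPtil_cont)
    (fun t ht i j => ?_) (fun t _ => ?_) h0
  · have h := (hPtil t ht i j).sub (hP t ht i j)
    rwa [← Matrix.sub_apply, riccati_sub_riccati] at h
  · exact (isHermitian_iff_isSymm.2 (hPtilsym t)).sub (isHermitian_iff_isSymm.2 (hPsym t))

/-- Monotonicity of solutions of the differential Riccati equation
`Ṗ = AᵀP + PA + PBBᵀP + CᵀC` with respect to initial data in the Loewner order: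
if `P₀ − P̃₀ ⪯ 0` then `P_t − P̃_t ⪯ 0` on `[0,T]`. -/
theorem riccati_monotone {n m p : ℕ} (T : ℝ) (hT : 0 < T)
    (A : Matrix (Fin n) (Fin n) ℝ) (B : Matrix (Fin n) (Fin m) ℝ)
    (C : Matrix (Fin p) (Fin n) ℝ)
    (P Ptil : ℝ → Matrix (Fin n) (Fin n) ℝ)
    (hPsym : ∀ t, (P t)ᵀ = P t) (hPtilsym : ∀ t, (Ptil t)ᵀ = Ptil t)
    (hP : ∀ t ∈ Set.Icc (0:ℝ) T, ∀ i j, HasDerivAt (fun s => P s i j)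
      ((Aᵀ * P t + P t * A + P t * B * Bᵀ * P t + Cᵀ * C) i j) t)
    (hPtil : ∀ t ∈ Set.Icc (0:ℝ) T, ∀ i j, HasDerivAt (fun s => Ptil s i j)
      ((Aᵀ * Ptil t + Ptil t * A + Ptil t * B * Bᵀ * Ptil t + Cᵀ * C) i j) t)
    (h0 : (Ptil 0 - P 0).PosSemidef) :
    ∀ t ∈ Set.Icc (0:ℝ) T, (Ptil t - P t).PosSemidef :=
  riccati_monotone_general T A B C P Ptil hPsym hPtilsym hP hPtil h0
end

section
/- Let A ∈ ℝ^{n×n}, B ∈ ℝ^{n×m}, C ∈ ℝ^{p×n}. Let Q¹¹, Q¹², Q²² : [0,T) → ℝ^{n×n} be differentiable and satisfy: Q̇¹¹_t = AᵀQ¹¹_t + Q¹¹_tA + Q¹¹_tBBᵀQ¹¹_t + CᵀC, Q̇¹²_t = (A + BBᵀQ¹¹_t)ᵀQ¹²_t, Q̇²²_t = (Q¹²_t)ᵀBBᵀQ¹²_t, with Q¹¹₀ = M, Q¹²₀ = −M, Q²²₀ = M for a symmetric matrix M. Then the block matrix Q_t = [[Q¹¹_t, Q¹²_t],[(Q¹²_t)ᵀ,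 Q²²_t]] satisfies the 2n-dimensional Riccati equation Q̇_t = ÂᵀQ_t + Q_tÂ + Q_tB̂B̂ᵀQ_t + ĈᵀĈ with Â = [[A,0],[0,0]], B̂ = [B;0], Ĉ = [C 0], and initial condition Q₀ = [[M,−M],[−M,M]]. -/
/-!
The coupled equations are the block decomposition of the big Riccati equation except for one
discrepancy: the upper right block of the big equation reads `AᵀQ¹² + Q¹¹BBᵀQ¹²`, whereas
the equation for `Q¹²` has `(Q¹¹)ᵀ` in place of `Q¹¹`. The two agree because `Q¹¹` stays
symmetric: the Riccati vector field commutes with transposition, so `(Q¹¹)ᵀ` solves the same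
equation from the same symmetric initial value `M`, and solutions of an ODE with a locally
Lipschitz vector field are unique.
-/

open Matrix Set

theorem ODE_solution_unique_of_locallyLipschitz {E : Type*} [NormedAddCommGroup E]
    [NormedSpace ℝ E] [ProperSpace E] {F : E → E} (hF : LocallyLipschitz F) {f g : ℝ → E}
    {a b : ℝ} (hf : ContinuousOn f (Icc a b))
    (hf' : ∀ t ∈ Ico a b, HasDerivWithinAt f (F (f t)) (Ici t) t)
    (hg : ContinuousOn g (Icc a b))
    (hg' : ∀ t ∈ Ico a b, HasDerivWithinAt g (F (g t)) (Ici t) t)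
    (ha : f a = g a) : EqOn f g (Icc a b) := by
  obtain ⟨r, hr⟩ := ((isCompact_Icc.image_of_continuousOn hf).union
    (isCompact_Icc.image_of_continuousOn hg)).isBounded.subset_closedBall 0
  obtain ⟨K, hK⟩ := LocallyLipschitzOn.exists_lipschitzOnWith_of_compact
    (isCompact_closedBall 0 r) hF.locallyLipschitzOn
  exact ODE_solution_unique_of_mem_Icc_right (s := fun _ => Metric.closedBall 0 r)
    (fun _ _ => hK) hf hf' (fun t ht => hr (Or.inl ⟨t, Ico_subset_Icc_self ht, rfl⟩))
    hg hg' (fun t ht => hr (Or.inr ⟨t, Ico_subset_Icc_self ht, rfl⟩)) ha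

namespace Matrix

variable {ι κ μ R : Type*}

section Algebra

variable [Fintype ι] [Fintype κ] [Fintype μ] [CommRing R]

def riccatiField (A : Matrix ι ι R) (B : Matrix ι κ R) (C : Matrix μ ι R)
    (X : Matrix ι ι R) : Matrix ι ι R :=
  Aᵀ * X + X * A + X * B * Bᵀ * X + Cᵀ * C

theorem riccatiField_transpose (A : Matrix ι ι R) (B : Matrix ι κ R) (C : Matrix μ ι R)
    (X : Matrix ι ι R) : riccatiField A B C Xᵀ = (riccatiField A B C X)ᵀ := by
  simp only [riccatiField, transpose_add, transpose_mul, transpose_transpose, Matrix.mul_assoc]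
  abel

theorem riccatiField_fromBlocks (A : Matrix ι ι R) (B : Matrix ι κ R) (C : Matrix μ ι R)
    {X₁₁ X₁₂ X₂₂ : Matrix ι ι R} (hX₁₁ : X₁₁ᵀ = X₁₁) :
    riccatiField (fromBlocks A 0 0 0) (fromRows B 0) (fromCols C 0)
        (fromBlocks X₁₁ X₁₂ X₁₂ᵀ X₂₂) =
      fromBlocks (riccatiField A B C X₁₁) ((A + B * Bᵀ * X₁₁)ᵀ * X₁₂)
        ((A + B * Bᵀ * X₁₁)ᵀ * X₁₂)ᵀ (X₁₂ᵀ * B * Bᵀ * X₁₂) := by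
  have hB : fromRows B (0 : Matrix ι κ R) * (fromRows B 0)ᵀ =
      (fromBlocks (B * Bᵀ) 0 0 0 : Matrix (ι ⊕ ι) (ι ⊕ ι) R) := by
    rw [transpose_fromRows, fromRows_mul_fromCols]
    simp
  have hC : (fromCols C (0 : Matrix μ ι R))ᵀ * fromCols C 0 =
      (fromBlocks (Cᵀ * C) 0 0 0 : Matrix (ι ⊕ ι) (ι ⊕ ι) R) := by
    rw [transpose_fromCols, fromRows_mul_fromCols]
    simp
  rw [riccatiField, Matrix.mul_assoc _ (fromRows B 0), hB, hC, fromBlocks_transpose]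
  simp only [fromBlocks_multiply, fromBlocks_add, Matrix.mul_zero, Matrix.zero_mul, add_zero,
    zero_add, transpose_zero, riccatiField, transpose_add, transpose_mul, transpose_transpose,
    hX₁₁, Matrix.add_mul, Matrix.mul_assoc]

end Algebra

section Analysis

attribute [local instance] Matrix.normedAddCommGroup Matrix.normedSpace

variable [Fintype ι] [Fintype κ] [Fintype μ]

theorem hasDerivAt_transpose {Q : ℝ → Matrix ι ι ℝ} {Q' : Matrix ι ι ℝ} {t : ℝ}
    (hQ : HasDerivAt Q Q' t) : HasDerivAt (fun s => (Q s)ᵀ) Q'ᵀ t :=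
  hasDerivAt_pi.2 fun i => hasDerivAt_pi.2 fun j =>
    hasDerivAt_pi.1 (hasDerivAt_pi.1 hQ j) i

theorem contDiff_riccatiField (A : Matrix ι ι ℝ) (B : Matrix ι κ ℝ) (C : Matrix μ ι ℝ)
    {k : WithTop ℕ∞} : ContDiff ℝ k (riccatiField A B C) := by
  refine contDiff_pi.2 fun i => contDiff_pi.2 fun j => ?_
  simp only [riccatiField, add_apply, mul_apply]
  fun_prop

theorem transpose_eq_self_of_hasDerivAt_riccatiField (A : Matrix ι ι ℝ) (B : Matrix ι κ ℝ)
    (C : Matrix μ ι ℝ) {Q : ℝ → Matrix ι ι ℝ} {a b : ℝ}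
    (hQ : ∀ t ∈ Ico a b, ∀ i j,
      HasDerivAt (fun s => Q s i j) (riccatiField A B C (Q t) i j) t)
    (ha : (Q a)ᵀ = Q a) : ∀ t ∈ Ico a b, (Q t)ᵀ = Q t := by
  intro t ht
  have hQ' : ∀ s ∈ Icc a t, HasDerivAt Q (riccatiField A B C (Q s)) s := fun s hs =>
    hasDerivAt_pi.2 fun i => hasDerivAt_pi.2 (hQ s (Icc_subset_Ico_right ht.2 hs) i)
  have hQT : ∀ s ∈ Icc a t, HasDerivAt (fun s => (Q s)ᵀ) (riccatiField A B C (Q s)ᵀ) s := by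
    intro s hs
    rw [riccatiField_transpose]
    exact hasDerivAt_transpose (hQ' s hs)
  have hF : LocallyLipschitz (riccatiField A B C) :=
    (contDiff_riccatiField A B C (k := 1)).locallyLipschitz
  exact ODE_solution_unique_of_locallyLipschitz hF (HasDerivAt.continuousOn hQT)
    (fun s hs => (hQT s (Ico_subset_Icc_self hs)).hasDerivWithinAt)
    (HasDerivAt.continuousOn hQ') (fun s hs => (hQ' s (Ico_subset_Icc_self hs)).hasDerivWithinAt)
    ha ⟨ht.1, le_rfl⟩

end Analysis

end Matrix

theorem block_riccati_equivalence_general {n m p : ℕ} (T : ℝ)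
    (A : Matrix (Fin n) (Fin n) ℝ) (B : Matrix (Fin n) (Fin m) ℝ)
    (C : Matrix (Fin p) (Fin n) ℝ) (M : Matrix (Fin n) (Fin n) ℝ) (hM : Mᵀ = M)
    (Q11 Q12 Q22 : ℝ → Matrix (Fin n) (Fin n) ℝ)
    (h11 : ∀ t ∈ Set.Ico (0:ℝ) T, ∀ i j, HasDerivAt (fun s => Q11 s i j)
      ((Aᵀ * Q11 t + Q11 t * A + Q11 t * B * Bᵀ * Q11 t + Cᵀ * C) i j) t)
    (h12 : ∀ t ∈ Set.Ico (0:ℝ) T, ∀ i j, HasDerivAt (fun s => Q12 s i j)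
      (((A + B * Bᵀ * Q11 t)ᵀ * Q12 t) i j) t)
    (h22 : ∀ t ∈ Set.Ico (0:ℝ) T, ∀ i j, HasDerivAt (fun s => Q22 s i j)
      (((Q12 t)ᵀ * B * Bᵀ * Q12 t) i j) t)
    (h110 : Q11 0 = M) (h120 : Q12 0 = -M) (h220 : Q22 0 = M) :
    let Ahat : Matrix (Fin n ⊕ Fin n) (Fin n ⊕ Fin n) ℝ := fromBlocks A 0 0 0
    let Bhat : Matrix (Fin n ⊕ Fin n) (Fin m) ℝ := fromRows B 0
    let Chat : Matrix (Fin p) (Fin n ⊕ Fin n) ℝ := fromCols C 0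
    let Q : ℝ → Matrix (Fin n ⊕ Fin n) (Fin n ⊕ Fin n) ℝ :=
      fun t => fromBlocks (Q11 t) (Q12 t) (Q12 t)ᵀ (Q22 t)
    (∀ t ∈ Set.Ico (0:ℝ) T, ∀ i j, HasDerivAt (fun s => Q s i j)
      ((Ahatᵀ * Q t + Q t * Ahat + Q t * Bhat * Bhatᵀ * Q t + Chatᵀ * Chat) i j) t) ∧
      Q 0 = fromBlocks M (-M) (-M) M := by
  intro Ahat Bhat Chat Q
  have hsym : ∀ t ∈ Ico (0:ℝ) T, (Q11 t)ᵀ = Q11 t :=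
    transpose_eq_self_of_hasDerivAt_riccatiField A B C h11 (h110 ▸ hM)
  refine ⟨fun t ht i j => ?_, ?_⟩
  · change HasDerivAt _ (riccatiField Ahat Bhat Chat (Q t) i j) t
    rw [riccatiField_fromBlocks A B C (hsym t ht)]
    rcases i with i | i <;> rcases j with j | j
    · exact h11 t ht i j
    · exact h12 t ht i j
    · exact h12 t ht j i
    · exact h22 t ht i j
  · simp only [Q, h110, h120, h220, transpose_neg, hM]

/-- The three coupled block ODEs for `Q¹¹, Q¹², Q²²` are exactly the block
decomposition of the `2n`-dimensional differential Riccati equation with data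
`Â = [[A,0],[0,0]]`, `B̂ = [B;0]`, `Ĉ = [C 0]` and `Q₀ = [[M,−M],[−M,M]]`. -/
theorem block_riccati_equivalence {n m p : ℕ} (T : ℝ) (hT : 0 < T)
    (A : Matrix (Fin n) (Fin n) ℝ) (B : Matrix (Fin n) (Fin m) ℝ)
    (C : Matrix (Fin p) (Fin n) ℝ) (M : Matrix (Fin n) (Fin n) ℝ) (hM : Mᵀ = M)
    (Q11 Q12 Q22 : ℝ → Matrix (Fin n) (Fin n) ℝ)
    (h11 : ∀ t ∈ Set.Ico (0:ℝ) T, ∀ i j, HasDerivAt (fun s => Q11 s i j)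
      ((Aᵀ * Q11 t + Q11 t * A + Q11 t * B * Bᵀ * Q11 t + Cᵀ * C) i j) t)
    (h12 : ∀ t ∈ Set.Ico (0:ℝ) T, ∀ i j, HasDerivAt (fun s => Q12 s i j)
      (((A + B * Bᵀ * Q11 t)ᵀ * Q12 t) i j) t)
    (h22 : ∀ t ∈ Set.Ico (0:ℝ) T, ∀ i j, HasDerivAt (fun s => Q22 s i j)
      (((Q12 t)ᵀ * B * Bᵀ * Q12 t) i j) t)
    (h110 : Q11 0 = M) (h120 : Q12 0 = -M) (h220 : Q22 0 = M) :
    let Ahat : Matrix (Fin n ⊕ Fin n) (Fin n ⊕ Fin n) ℝ := fromBlocks A 0 0 0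
    let Bhat : Matrix (Fin n ⊕ Fin n) (Fin m) ℝ := fromRows B 0
    let Chat : Matrix (Fin p) (Fin n ⊕ Fin n) ℝ := fromCols C 0
    let Q : ℝ → Matrix (Fin n ⊕ Fin n) (Fin n ⊕ Fin n) ℝ :=
      fun t => fromBlocks (Q11 t) (Q12 t) (Q12 t)ᵀ (Q22 t)
    (∀ t ∈ Set.Ico (0:ℝ) T, ∀ i j, HasDerivAt (fun s => Q s i j)
      ((Ahatᵀ * Q t + Q t * Ahat + Q t * Bhat * Bhatᵀ * Q t + Chatᵀ * Chat) i j) t) ∧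
      Q 0 = fromBlocks M (-M) (-M) M :=
  block_riccati_equivalence_general T A B C M hM Q11 Q12 Q22 h11 h12 h22 h110 h120 h220
end

section
/- Let Σ ∈ ℝ^{2n×2n} have blocks Σ¹¹, Σ¹², Σ²¹, Σ²², and let M ∈ Sym(n,ℝ) be such that both M and Σ¹¹ + Σ¹²M are invertible. Define Ξ(Σ) ∈ ℝ^{2n×2n} by Ξ¹¹ = (Σ²¹+Σ²²M)(Σ¹¹+Σ¹²M)⁻¹, Ξ¹² = Ξ¹¹Σ¹²M − Σ²²M, Ξ²¹ = −M(Σ¹¹+Σ¹²M)⁻¹, Ξ²² = Ξ²¹Σ¹²M + M. Then Ξ(Σ)²¹ = −M(Σ¹¹+Σ¹²M)⁻¹ is invertible, and the map Ξ⁻¹ defined on 2n×2n matrices Q with Q²¹ invertible by (Ξ⁻¹)¹¹ = −(Q²¹)⁻¹Q²², (Ξ⁻¹)¹² = −(Q²¹)⁻¹(M−Q²²)M⁻¹, (Ξ⁻¹)²¹ = Q¹¹(Ξ⁻¹)¹¹ + Q¹², (Ξ⁻¹)²² = Q¹¹(Ξ⁻¹)¹² − Q¹²M⁻¹ satisfies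 Ξ⁻¹(Ξ(Σ)) = Σ. -/
open Matrix

/-- The map `Ξ` (from the symplectic fundamental solution to the auxiliary DRE
solution) has invertible `(2,1)` block, and the explicit map `Ξ⁻¹` is a left
inverse of `Ξ` on matrices `Σ` with `Σ¹¹ + Σ¹²M` invertible. -/
theorem Xi_map_and_inverse {n : ℕ}
    (M S11 S12 S21 S22 : Matrix (Fin n) (Fin n) ℝ)
    (hM : Mᵀ = M) (hMinv : IsUnit M)
    (hS : IsUnit (S11 + S12 * M)) :
    let Ξ11 := (S21 + S22 * M) * (S11 + S12 * M)⁻¹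
    let Ξ12 := Ξ11 * S12 * M - S22 * M
    let Ξ21 := -(M * (S11 + S12 * M)⁻¹)
    let Ξ22 := Ξ21 * S12 * M + M
    IsUnit Ξ21 ∧
      -(Ξ21⁻¹ * Ξ22) = S11 ∧
      -(Ξ21⁻¹ * (M - Ξ22) * M⁻¹) = S12 ∧
      Ξ11 * (-(Ξ21⁻¹ * Ξ22)) + Ξ12 = S21 ∧
      Ξ11 * (-(Ξ21⁻¹ * (M - Ξ22) * M⁻¹)) - Ξ12 * M⁻¹ = S22 := by
  intro Ξ11 Ξ12 Ξ21 Ξ22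
  set A := S11 + S12 * M with hA
  have hdA : IsUnit A.det := (isUnit_iff_isUnit_det _).mp hS
  have hdM : IsUnit M.det := (isUnit_iff_isUnit_det _).mp hMinv
  have hA1 : A * A⁻¹ = 1 := mul_nonsing_inv _ hdA
  have hA2 : A⁻¹ * A = 1 := nonsing_inv_mul _ hdA
  have hM1 : M * M⁻¹ = 1 := mul_nonsing_inv _ hdM
  have hM2 : M⁻¹ * M = 1 := nonsing_inv_mul _ hdM
  have e1 : ∀ X : Matrix (Fin n) (Fin n) ℝ, A⁻¹ * (A * X) = X := fun X => by
    rw [← Matrix.mul_assoc, hA2, Matrix.one_mul]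
  have e2 : ∀ X : Matrix (Fin n) (Fin n) ℝ, A * (A⁻¹ * X) = X := fun X => by
    rw [← Matrix.mul_assoc, hA1, Matrix.one_mul]
  have e3 : ∀ X : Matrix (Fin n) (Fin n) ℝ, M⁻¹ * (M * X) = X := fun X => by
    rw [← Matrix.mul_assoc, hM2, Matrix.one_mul]
  have e4 : ∀ X : Matrix (Fin n) (Fin n) ℝ, M * (M⁻¹ * X) = X := fun X => by
    rw [← Matrix.mul_assoc, hM1, Matrix.one_mul]
  have hinv : Ξ21 * (-(A * M⁻¹)) = 1 := by
    show -(M * A⁻¹) * (-(A * M⁻¹)) = 1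
    rw [neg_mul_neg, Matrix.mul_assoc, e1, hM1]
  have hu : IsUnit Ξ21 :=
    (isUnit_iff_isUnit_det _).mpr (isUnit_det_of_right_inverse hinv)
  have hΞinv : Ξ21⁻¹ = -(A * M⁻¹) := inv_eq_right_inv hinv
  have key1 : -(Ξ21⁻¹ * Ξ22) = S11 := by
    show -(Ξ21⁻¹ * (Ξ21 * S12 * M + M)) = S11
    rw [hΞinv]
    show -(-(A * M⁻¹) * (-(M * A⁻¹) * S12 * M + M)) = S11
    simp only [Matrix.mul_add, neg_mul, Matrix.mul_assoc, e3, e4, e1, e2, neg_neg,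
      mul_neg, neg_add_rev, hM1]
    rw [hM2, Matrix.mul_one, hA]
    abel
  have key2 : -(Ξ21⁻¹ * (M - Ξ22) * M⁻¹) = S12 := by
    show -(Ξ21⁻¹ * (M - (Ξ21 * S12 * M + M)) * M⁻¹) = S12
    rw [hΞinv]
    show -(-(A * M⁻¹) * (M - (-(M * A⁻¹) * S12 * M + M)) * M⁻¹) = S12
    have : M - (-(M * A⁻¹) * S12 * M + M) = M * A⁻¹ * S12 * M := by
      simp [sub_eq_iff_eq_add]
    rw [this]
    simp only [neg_mul, neg_neg, Matrix.mul_assoc, e3, e4, e1, e2, hM1]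
    rw [Matrix.mul_one]
  refine ⟨hu, key1, key2, ?_, ?_⟩
  · rw [key1]
    show (S21 + S22 * M) * A⁻¹ * S11 + ((S21 + S22 * M) * A⁻¹ * S12 * M - S22 * M) = S21
    have : (S21 + S22 * M) * A⁻¹ * S11 + ((S21 + S22 * M) * A⁻¹ * S12 * M - S22 * M)
        = (S21 + S22 * M) * (A⁻¹ * A) - S22 * M := by
      rw [hA]
      simp only [Matrix.mul_add, Matrix.mul_assoc]
      abel
    rw [this, hA2, Matrix.mul_one]
    abel
  · rw [key2]
    show (S21 + S22 * M) * A⁻¹ * S12 - ((S21 + S22 * M) * A⁻¹ * S12 * M - S22 * M) * M⁻¹ = S22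
    simp only [Matrix.sub_mul, Matrix.mul_assoc, hM1, Matrix.mul_one]
    abel
end

section
/- Let Λ_t, Λ_s ∈ Sym(2n,ℝ) and suppose Λ_s¹¹ + Λ_t²² is negative definite. Define Λ_{t,s} ∈ Sym(2n,ℝ) by the ⊛-product: (Λ_t⊛Λ_s)¹¹ = Λ_t¹¹ − Λ_t¹²(Λ_s¹¹+Λ_t²²)⁻¹(Λ_t¹²)ᵀ, (Λ_t⊛Λ_s)¹² = −Λ_t¹²(Λ_s¹¹+Λ_t²²)⁻¹Λ_s¹², (Λ_t⊛Λ_s)²² = Λ_s²² − (Λ_s¹²)ᵀ(Λ_s¹¹+Λ_t²²)⁻¹Λ_s¹². Then for all x, y ∈ ℝⁿ, sup_{η∈ℝⁿ} ( ½[x;η]ᵀΛ_t[x;η] + ½[η;y]ᵀΛ_s[η;y] ) = ½[x;y]ᵀ(Λ_t⊛Λ_s)[x;y]. -/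
/-!
Put `z = [x; y]`. The objective is the quadratic form `[z; η]ᵀ M [z; η]` of the block
matrix `M = [[D, N], [Nᵀ, A]]` with `A = Λ_s¹¹ + Λ_t²²`, `D = diag(Λ_t¹¹, Λ_s²²)` and
`N = [Λ_t¹²; (Λ_s¹²)ᵀ]`. Completing the square in `η` writes it as
`zᵀ (D - N A⁻¹ Nᵀ) z + (η - η*)ᵀ A (η - η*)`; since `A` is negative definite the supremum is
attained at `η*` and equals the Schur complement form, and `D - N A⁻¹ Nᵀ` is exactly
`Λ_t ⊛ Λ_s` written in blocks.
-/

open Matrix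

namespace Matrix

variable {ι κ R : Type*} [Fintype ι] [Fintype κ]

theorem sumElim_dotProduct_fromBlocks_mulVec_sumElim [CommSemiring R]
    (P : Matrix κ κ R) (Q : Matrix κ ι R) (S : Matrix ι ι R) (u : κ → R) (v : ι → R) :
    Sum.elim u v ⬝ᵥ (fromBlocks P Q Qᵀ S *ᵥ Sum.elim u v) =
      u ⬝ᵥ (P *ᵥ u) + 2 * (u ⬝ᵥ (Q *ᵥ v)) + v ⬝ᵥ (S *ᵥ v) := by
  simp only [fromBlocks_mulVec, Sum.elim_comp_inl, Sum.elim_comp_inr,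
    sumElim_dotProduct_sumElim, dotProduct_add, dotProduct_transpose_mulVec]
  ring

theorem add_dotProduct_mulVec_add [CommRing R] {A : Matrix ι ι R} (hA : A.IsSymm) (η u : ι → R) :
    (η + u) ⬝ᵥ (A *ᵥ (η + u)) = η ⬝ᵥ (A *ᵥ η) + 2 * (η ⬝ᵥ (A *ᵥ u)) + u ⬝ᵥ (A *ᵥ u) := by
  have hsymm : u ⬝ᵥ (A *ᵥ η) = η ⬝ᵥ (A *ᵥ u) := by
    rw [← dotProduct_transpose_mulVec, hA.eq]
  rw [mulVec_add, dotProduct_add, add_dotProduct, add_dotProduct, hsymm]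
  ring

omit [Fintype ι] in
theorem isSymm_of_posDef_neg {A : Matrix ι ι ℝ} (hA : (-A).PosDef) : A.IsSymm := by
  simpa using hA.isHermitian.neg

omit [Fintype κ] in
theorem fromBlocks_sub_fromRows_mul_mul_transpose {μ : Type*} [CommRing R] {B : Matrix ι ι R}
    (hB : B.IsSymm) (P : Matrix κ κ R) (Q : Matrix κ ι R) (S : Matrix ι μ R) (U : Matrix μ μ R) :
    fromBlocks P 0 0 U - fromRows Q Sᵀ * B * (fromRows Q Sᵀ)ᵀ =
      fromBlocks (P - Q * B * Qᵀ) (-(Q * B * S)) (-(Q * B * S))ᵀ (U - Sᵀ * B * S) := by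
  rw [transpose_fromRows, transpose_transpose, fromRows_mul, fromRows_mul_fromCols, sub_eq_add_neg,
    fromBlocks_neg, fromBlocks_add]
  simp only [transpose_neg, transpose_mul, hB.eq, Matrix.mul_assoc, sub_eq_add_neg, zero_add]

variable [DecidableEq ι]

theorem sumElim_dotProduct_fromBlocks_mulVec_sumElim_eq_schur_add {A : Matrix ι ι ℝ}
    (hA : A.IsSymm) (hunit : IsUnit A) (D : Matrix κ κ ℝ) (N : Matrix κ ι ℝ) (z : κ → ℝ)
    (η : ι → ℝ) :
    Sum.elim z η ⬝ᵥ (fromBlocks D N Nᵀ A *ᵥ Sum.elim z η) =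
      z ⬝ᵥ ((D - N * A⁻¹ * Nᵀ) *ᵥ z) +
        (η + A⁻¹ *ᵥ Nᵀ *ᵥ z) ⬝ᵥ (A *ᵥ (η + A⁻¹ *ᵥ Nᵀ *ᵥ z)) := by
  set u := A⁻¹ *ᵥ Nᵀ *ᵥ z
  have hAu : A *ᵥ u = Nᵀ *ᵥ z := by
    rw [mulVec_mulVec, mul_nonsing_inv _ ((isUnit_iff_isUnit_det A).mp hunit), one_mulVec]
  have hlin : z ⬝ᵥ (N *ᵥ η) = η ⬝ᵥ (A *ᵥ u) := by
    rw [hAu, dotProduct_transpose_mulVec]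
  have hschur : z ⬝ᵥ ((N * A⁻¹ * Nᵀ) *ᵥ z) = u ⬝ᵥ (A *ᵥ u) := by
    rw [← mulVec_mulVec, ← mulVec_mulVec, hAu, ← dotProduct_transpose_mulVec, dotProduct_comm]
  rw [sumElim_dotProduct_fromBlocks_mulVec_sumElim, add_dotProduct_mulVec_add hA, sub_mulVec,
    dotProduct_sub, hlin, hschur]
  ring

theorem iSup_sumElim_dotProduct_fromBlocks_mulVec_sumElim {A : Matrix ι ι ℝ}
    (hA : (-A).PosDef) (D : Matrix κ κ ℝ) (N : Matrix κ ι ℝ) (z : κ → ℝ) :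
    ⨆ η, Sum.elim z η ⬝ᵥ (fromBlocks D N Nᵀ A *ᵥ Sum.elim z η) =
      z ⬝ᵥ ((D - N * A⁻¹ * Nᵀ) *ᵥ z) := by
  have hunit : IsUnit A := by simpa using hA.isUnit.neg
  have hnonpos (v : ι → ℝ) : v ⬝ᵥ (A *ᵥ v) ≤ 0 := by
    simpa [neg_mulVec] using hA.posSemidef.dotProduct_mulVec_nonneg v
  simp_rw [sumElim_dotProduct_fromBlocks_mulVec_sumElim_eq_schur_add
    (isSymm_of_posDef_neg hA) hunit]
  refine IsGreatest.csSup_eq ⟨⟨-(A⁻¹ *ᵥ Nᵀ *ᵥ z), by simp⟩, ?_⟩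
  rintro _ ⟨η, rfl⟩
  linarith [hnonpos (η + A⁻¹ *ᵥ Nᵀ *ᵥ z)]

end Matrix

theorem ostar_product_sup_general {n : ℕ}
    (T11 T12 T22 S11 S12 S22 : Matrix (Fin n) (Fin n) ℝ)
    (hneg : (-(S11 + T22)).PosDef) :
    ∀ x y : Fin n → ℝ,
      let Λt : Matrix (Fin n ⊕ Fin n) (Fin n ⊕ Fin n) ℝ := fromBlocks T11 T12 T12ᵀ T22
      let Λs : Matrix (Fin n ⊕ Fin n) (Fin n ⊕ Fin n) ℝ := fromBlocks S11 S12 S12ᵀ S22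
      let P11 := T11 - T12 * (S11 + T22)⁻¹ * T12ᵀ
      let P12 := -(T12 * (S11 + T22)⁻¹ * S12)
      let P22 := S22 - S12ᵀ * (S11 + T22)⁻¹ * S12
      let Λts : Matrix (Fin n ⊕ Fin n) (Fin n ⊕ Fin n) ℝ := fromBlocks P11 P12 P12ᵀ P22
      (⨆ η : Fin n → ℝ,
          (1/2 : ℝ) * (Sum.elim x η ⬝ᵥ (Λt *ᵥ Sum.elim x η)) +
            (1/2 : ℝ) * (Sum.elim η y ⬝ᵥ (Λs *ᵥ Sum.elim η y)))
        = (1/2 : ℝ) * (Sum.elim x y ⬝ᵥ (Λts *ᵥ Sum.elim x y)) := by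
  intro x y Λt Λs P11 P12 P22 Λts
  set N := fromRows T12 S12ᵀ
  have hobjective (η : Fin n → ℝ) :
      1 / 2 * (Sum.elim x η ⬝ᵥ (Λt *ᵥ Sum.elim x η)) +
          1 / 2 * (Sum.elim η y ⬝ᵥ (Λs *ᵥ Sum.elim η y)) =
        1 / 2 * (Sum.elim (Sum.elim x y) η ⬝ᵥ
          (fromBlocks (fromBlocks T11 0 0 S22) N Nᵀ (S11 + T22) *ᵥ Sum.elim (Sum.elim x y) η)) := by
    simp only [Λt, Λs, N, sumElim_dotProduct_fromBlocks_mulVec_sumElim]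
    simp only [fromRows_mulVec, fromBlocks_mulVec, Sum.elim_comp_inl, Sum.elim_comp_inr,
      zero_mulVec, add_zero, zero_add, sumElim_dotProduct_sumElim, dotProduct_transpose_mulVec,
      add_mulVec, dotProduct_add]
    ring
  have hΛts : Λts = fromBlocks T11 0 0 S22 - N * (S11 + T22)⁻¹ * Nᵀ :=
    (fromBlocks_sub_fromRows_mul_mul_transpose (isSymm_of_posDef_neg hneg).inv _ _ _ _).symm
  simp_rw [hobjective]
  rw [← Real.mul_iSup_of_nonneg (by norm_num),
    iSup_sumElim_dotProduct_fromBlocks_mulVec_sumElim hneg, hΛts]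

/-- The ⊛-product of two symmetric `2n×2n` matrices computes the max-plus
composition of the associated quadratic kernels:
`sup_η (½[x;η]ᵀΛ_t[x;η] + ½[η;y]ᵀΛ_s[η;y]) = ½[x;y]ᵀ(Λ_t⊛Λ_s)[x;y]`. -/
theorem ostar_product_sup {n : ℕ}
    (T11 T12 T22 S11 S12 S22 : Matrix (Fin n) (Fin n) ℝ)
    (hT11 : T11ᵀ = T11) (hT22 : T22ᵀ = T22)
    (hS11 : S11ᵀ = S11) (hS22 : S22ᵀ = S22)
    (hneg : (-(S11 + T22)).PosDef) :
    ∀ x y : Fin n → ℝ,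
      let Λt : Matrix (Fin n ⊕ Fin n) (Fin n ⊕ Fin n) ℝ := fromBlocks T11 T12 T12ᵀ T22
      let Λs : Matrix (Fin n ⊕ Fin n) (Fin n ⊕ Fin n) ℝ := fromBlocks S11 S12 S12ᵀ S22
      let P11 := T11 - T12 * (S11 + T22)⁻¹ * T12ᵀ
      let P12 := -(T12 * (S11 + T22)⁻¹ * S12)
      let P22 := S22 - S12ᵀ * (S11 + T22)⁻¹ * S12
      let Λts : Matrix (Fin n ⊕ Fin n) (Fin n ⊕ Fin n) ℝ := fromBlocks P11 P12 P12ᵀ P22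
      (⨆ η : Fin n → ℝ,
          (1/2 : ℝ) * (Sum.elim x η ⬝ᵥ (Λt *ᵥ Sum.elim x η)) +
            (1/2 : ℝ) * (Sum.elim η y ⬝ᵥ (Λs *ᵥ Sum.elim η y)))
        = (1/2 : ℝ) * (Sum.elim x y ⬝ᵥ (Λts *ᵥ Sum.elim x y)) :=
  ostar_product_sup_general T11 T12 T22 S11 S12 S22 hneg
end

section
/- Let A ∈ ℝ^{n×n}, B ∈ ℝ^{n×m}, C ∈ ℝ^{p×n}, M, M₀ ∈ Sym(n,ℝ) with M₀ a solution of the algebraic Riccati equation 0 = AᵀM₀ + M₀A + M₀BBᵀM₀ + CᵀC and M − M₀ negative definite. If Q¹¹ : [0,T) → Sym(n,ℝ) solves Q̇¹¹_t = AᵀQ¹¹_t + Q¹¹_tA + Q¹¹_tBBᵀQ¹¹_t + CᵀC with Q¹¹₀ = M, then Q¹¹_t − M₀ is negative semidefinite for all t ∈ [0,T). -/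
/-!
Put `D = Q¹¹ - M₀` and `F = A + B Bᵀ M₀`. Subtracting the algebraic Riccati equation, `D` solves
`Ḋ = Fᵀ D + D F + D B Bᵀ D`, which has no constant term. Hence at an eigenvector `v` of `D` with
eigenvalue `μ ∈ (0, 1]` we get `vᵀ Ḋ v = μ vᵀ (Fᵀ + F) v + μ² vᵀ B Bᵀ v ≤ K μ |v|²`: the top of the
spectrum of `D` grows at most exponentially. So for `c > K` the barrier `δ e^{c(u - t)}` is never
reached from `D₀ ⪯ 0`: at the first time a form `vᵀ D v` with `|v| = 1` touches it, `v` is an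
eigenvector for the top eigenvalue and the barrier is growing strictly faster. Let `δ → 0`.
-/

open Matrix Set Filter Topology

theorem HasDerivAt.nonneg_of_forall_Ioo_le {f : ℝ → ℝ} {f' a b : ℝ} (hf : HasDerivAt f f' b)
    (hab : a < b) (hle : ∀ x ∈ Ioo a b, f x ≤ f b) : 0 ≤ f' := by
  refine ge_of_tendsto hf.tendsto_slope_zero_left ?_
  filter_upwards [Ioo_mem_nhdsLT (sub_neg.2 hab)] with h hh
  have := hle (b + h) ⟨by linarith [hh.1], by linarith [hh.2]⟩
  rw [smul_eq_mul]
  exact mul_nonneg_of_nonpos_of_nonpos (inv_nonpos.2 hh.2.le) (by linarith)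

theorem exists_first_nonneg {E : Type*} [TopologicalSpace E] [T2Space E] {f : ℝ → E → ℝ}
    {S : Set E} {a b : ℝ} (hS : IsCompact S) (hf : ContinuousOn (Function.uncurry f) (Icc a b ×ˢ S))
    (hex : ∃ u ∈ Icc a b, ∃ v ∈ S, 0 ≤ f u v) :
    ∃ t₀ ∈ Icc a b, ∃ v ∈ S, 0 ≤ f t₀ v ∧ ∀ u ∈ Ico a t₀, ∀ w ∈ S, f u w < 0 := by
  set K := Icc a b ×ˢ S ∩ Function.uncurry f ⁻¹' Ici 0
  have hK : IsCompact K := (isCompact_Icc.prod hS).of_isClosed_subset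
    (hf.preimage_isClosed_of_isClosed (isCompact_Icc.prod hS).isClosed isClosed_Ici)
    inter_subset_left
  obtain ⟨u, hu, v, hv, hfuv⟩ := hex
  obtain ⟨t₀, ⟨⟨t₀', v₀⟩, ⟨⟨ht₀, hv₀⟩, hf₀⟩, rfl⟩, hleast⟩ :=
    (hK.image continuous_fst).exists_isLeast ⟨u, (u, v), ⟨⟨hu, hv⟩, hfuv⟩, rfl⟩
  refine ⟨t₀', ht₀, v₀, hv₀, hf₀, fun s hs w hw => ?_⟩
  by_contra! hsw
  exact (hs.2.trans_le (hleast ⟨(s, w), ⟨⟨⟨hs.1, hs.2.le.trans ht₀.2⟩, hw⟩, hsw⟩, rfl⟩)).false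

section QuadraticForm

variable {n : Type*} [Fintype n]


theorem Matrix.dotProduct_mulVec_le_sum_abs_mul (X : Matrix n n ℝ) (v : n → ℝ) :
    v ⬝ᵥ X *ᵥ v ≤ (∑ i, ∑ j, |X i j|) * (v ⬝ᵥ v) := by
  set s := v ⬝ᵥ v with hs
  have hsq : ∀ i, |v i| ^ 2 ≤ s := fun i => by
    simpa [hs, dotProduct, sq] using
      Finset.single_le_sum (fun j _ => mul_self_nonneg (v j)) (Finset.mem_univ i)
  have hexp : v ⬝ᵥ X *ᵥ v = ∑ i, ∑ j, v i * X i j * v j := by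
    simp only [dotProduct, mulVec, Finset.mul_sum, mul_assoc]
  rw [hexp, Finset.sum_mul]
  refine Finset.sum_le_sum fun i _ => ?_
  rw [Finset.sum_mul]
  refine Finset.sum_le_sum fun j _ => ?_
  calc v i * X i j * v j ≤ |X i j| * (|v i| * |v j|) :=
        (le_abs_self _).trans_eq (by rw [abs_mul, abs_mul]; ring)
    _ ≤ |X i j| * s := by
        gcongr
        nlinarith [sq_nonneg (|v i| - |v j|), hsq i, hsq j]

theorem Matrix.dotProduct_mulVec_le_of_forall_mem_sphere {X : Matrix n n ℝ} {μ : ℝ}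
    (h : ∀ w ∈ Metric.sphere (0 : n → ℝ) 1, w ⬝ᵥ X *ᵥ w ≤ μ * (w ⬝ᵥ w)) (v : n → ℝ) :
    v ⬝ᵥ X *ᵥ v ≤ μ * (v ⬝ᵥ v) := by
  rcases eq_or_ne v 0 with rfl | hv
  · simp
  have hw := h (‖v‖⁻¹ • v) (by simpa using norm_smul_inv_norm (𝕜 := ℝ) hv)
  simp only [smul_dotProduct, dotProduct_smul, mulVec_smul, smul_eq_mul] at hw
  have hr : 0 < ‖v‖⁻¹ * ‖v‖⁻¹ := by positivity
  nlinarith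

theorem Matrix.mulVec_eq_smul_of_dotProduct_mulVec_eq {D : Matrix n n ℝ} (hD : Dᵀ = D) {μ : ℝ}
    (hle : ∀ w, w ⬝ᵥ D *ᵥ w ≤ μ * (w ⬝ᵥ w)) {v : n → ℝ}
    (hv : v ⬝ᵥ D *ᵥ v = μ * (v ⬝ᵥ v)) : D *ᵥ v = μ • v := by
  classical
  have hquad : ∀ w, w ⬝ᵥ (μ • 1 - D) *ᵥ w = μ * (w ⬝ᵥ w) - w ⬝ᵥ D *ᵥ w := fun w => by
    rw [sub_mulVec, dotProduct_sub, smul_mulVec, one_mulVec, dotProduct_smul, smul_eq_mul]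
  have hpsd : (μ • 1 - D).PosSemidef := by
    refine posSemidef_iff_dotProduct_mulVec.2 ⟨?_, fun w => ?_⟩
    · rw [IsHermitian, conjTranspose_eq_transpose_of_trivial, transpose_sub, transpose_smul,
        transpose_one, hD]
    · simpa [hquad] using hle w
  have := (hpsd.dotProduct_mulVec_zero_iff v).1 (by simp [hquad, hv])
  rwa [sub_mulVec, smul_mulVec, one_mulVec, sub_eq_zero, eq_comm] at this

theorem Matrix.neg_posSemidef_iff {X : Matrix n n ℝ} (hX : Xᵀ = X) :
    (-X).PosSemidef ↔ ∀ v, v ⬝ᵥ X *ᵥ v ≤ 0 := by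
  simp [posSemidef_iff_dotProduct_mulVec, IsHermitian, conjTranspose_eq_transpose_of_trivial, hX,
    neg_mulVec]

theorem Matrix.hasDerivAt_dotProduct_mulVec_s15 {D : ℝ → Matrix n n ℝ} {D' : Matrix n n ℝ} {u : ℝ}
    (hD : ∀ i j, HasDerivAt (fun s => D s i j) (D' i j) u) (v : n → ℝ) :
    HasDerivAt (fun s => v ⬝ᵥ D s *ᵥ v) (v ⬝ᵥ D' *ᵥ v) u := by
  simp only [dotProduct, mulVec, Finset.mul_sum]
  exact HasDerivAt.fun_sum fun i _ => HasDerivAt.fun_sum fun j _ =>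
    ((hD i j).mul_const (v j)).const_mul (v i)

theorem Matrix.continuousOn_uncurry_dotProduct_mulVec {D : ℝ → Matrix n n ℝ} {s : Set ℝ}
    (hD : ∀ i j, ContinuousOn (fun u => D u i j) s) :
    ContinuousOn (Function.uncurry fun u (v : n → ℝ) => v ⬝ᵥ D u *ᵥ v) (s ×ˢ univ) := by
  have hD' : ContinuousOn D s := continuousOn_pi.2 fun i => continuousOn_pi.2 (hD i)
  exact (continuous_snd.dotProduct (continuous_fst.matrix_mulVec continuous_snd)).comp_continuousOn
    ((hD'.comp continuousOn_fst fun p hp => hp.1).prodMk continuousOn_snd)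

theorem Matrix.dotProduct_mulVec_le_of_barrier {D D' : ℝ → Matrix n n ℝ} {β β' : ℝ → ℝ} {t : ℝ}
    (hsym : ∀ u ∈ Icc 0 t, (D u)ᵀ = D u)
    (hD : ∀ u ∈ Icc 0 t, ∀ i j, HasDerivAt (fun s => D s i j) (D' u i j) u)
    (hβ : ∀ u ∈ Icc 0 t, HasDerivAt β (β' u) u)
    (h0 : ∀ v ≠ 0, v ⬝ᵥ D 0 *ᵥ v < β 0 * (v ⬝ᵥ v))
    (htouch : ∀ u ∈ Icc 0 t, ∀ v ≠ 0, D u *ᵥ v = β u • v →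
      v ⬝ᵥ D' u *ᵥ v < β' u * (v ⬝ᵥ v)) :
    ∀ u ∈ Icc 0 t, ∀ v, v ⬝ᵥ D u *ᵥ v ≤ β u * (v ⬝ᵥ v) := by
  have hderiv : ∀ u ∈ Icc 0 t, ∀ v, HasDerivAt (fun s => v ⬝ᵥ D s *ᵥ v - β s * (v ⬝ᵥ v))
      (v ⬝ᵥ D' u *ᵥ v - β' u * (v ⬝ᵥ v)) u := fun u hu v =>
    (hasDerivAt_dotProduct_mulVec_s15 (hD u hu) v).sub ((hβ u hu).mul_const _)
  suffices hsphere : ∀ u ∈ Icc 0 t, ∀ v ∈ Metric.sphere (0 : n → ℝ) 1,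
      v ⬝ᵥ D u *ᵥ v - β u * (v ⬝ᵥ v) < 0 from fun u hu =>
    dotProduct_mulVec_le_of_forall_mem_sphere fun v hv => by linarith [hsphere u hu v hv]
  have hne : ∀ v ∈ Metric.sphere (0 : n → ℝ) 1, v ≠ 0 := fun v hv h => by simp [h] at hv
  by_contra! hbad
  have hcont : ContinuousOn (Function.uncurry fun u (v : n → ℝ) =>
      v ⬝ᵥ D u *ᵥ v - β u * (v ⬝ᵥ v)) (Icc 0 t ×ˢ Metric.sphere 0 1) := by
    have hβ' : ContinuousOn β (Icc 0 t) := fun u hu => (hβ u hu).continuousAt.continuousWithinAt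
    have hDc : ∀ i j, ContinuousOn (fun u => D u i j) (Icc 0 t) := fun i j u hu =>
      (hD u hu i j).continuousAt.continuousWithinAt
    exact ((continuousOn_uncurry_dotProduct_mulVec hDc).mono
      (prod_mono subset_rfl (subset_univ _))).sub
      ((hβ'.comp continuousOn_fst fun p hp => hp.1).mul
        (continuous_snd.dotProduct continuous_snd).continuousOn)
  obtain ⟨t₀, ht₀, v, hv, hfv, hbefore⟩ := exists_first_nonneg (isCompact_sphere 0 1) hcont hbad
  have ht₀pos : 0 < t₀ := ht₀.1.lt_of_ne fun h => by
    subst h; linarith [h0 v (hne v hv)]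
  have hle : ∀ w, w ⬝ᵥ D t₀ *ᵥ w ≤ β t₀ * (w ⬝ᵥ w) :=
    dotProduct_mulVec_le_of_forall_mem_sphere fun w hw => by
      have hmem : t₀ ∈ closure (Ico 0 t₀) := by
        rw [closure_Ico ht₀pos.ne]; exact right_mem_Icc.2 ht₀pos.le
      have := ContinuousWithinAt.closure_le hmem
        (hderiv t₀ ht₀ w).continuousAt.continuousWithinAt continuousWithinAt_const
        fun u hu => (hbefore u hu w hw).le
      linarith
  have heig : D t₀ *ᵥ v = β t₀ • v :=
    mulVec_eq_smul_of_dotProduct_mulVec_eq (hsym t₀ ht₀) hle (le_antisymm (hle v) (by linarith))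
  have hslope := (hderiv t₀ ht₀ v).nonneg_of_forall_Ioo_le ht₀pos fun u hu =>
    (hbefore u ⟨hu.1.le, hu.2⟩ v hv).le.trans hfv
  linarith [htouch t₀ ht₀ v (hne v hv) heig]

theorem Matrix.neg_posSemidef_of_hasDerivAt {D D' : ℝ → Matrix n n ℝ} {t : ℝ} (K : ℝ)
    (ht : 0 ≤ t) (hsym : ∀ u ∈ Icc 0 t, (D u)ᵀ = D u)
    (hD : ∀ u ∈ Icc 0 t, ∀ i j, HasDerivAt (fun s => D s i j) (D' u i j) u)
    (hK : ∀ u ∈ Icc 0 t, ∀ (μ : ℝ) v, 0 < μ → μ ≤ 1 → D u *ᵥ v = μ • v →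
      v ⬝ᵥ D' u *ᵥ v ≤ K * μ * (v ⬝ᵥ v))
    (h0 : (-D 0).PosSemidef) : (-D t).PosSemidef := by
  rw [neg_posSemidef_iff (hsym 0 ⟨le_rfl, ht⟩)] at h0
  rw [neg_posSemidef_iff (hsym t ⟨ht, le_rfl⟩)]
  -- `c ≥ 0` keeps the barrier below `1` on `[0, t]`, where `hK` applies
  set c := |K| + 1
  have hpos : ∀ v : n → ℝ, v ≠ 0 → 0 < v ⬝ᵥ v := fun v hv =>
    (dotProduct_self_star_nonneg v).lt_of_ne' (dotProduct_self_eq_zero.not.2 hv)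
  have hsmall : ∀ δ ∈ Ioo (0 : ℝ) 1, ∀ v, v ⬝ᵥ D t *ᵥ v ≤ δ * (v ⬝ᵥ v) := by
    intro δ hδ
    have hbarrier := dotProduct_mulVec_le_of_barrier (β := fun u => δ * Real.exp (c * (u - t)))
      (β' := fun u => c * (δ * Real.exp (c * (u - t)))) hsym hD
      (fun u _ => by
        simpa [mul_comm, mul_left_comm] using
          (((hasDerivAt_id u).sub_const t).const_mul c).exp.const_mul δ)
      (fun v hv => by
        linarith [h0 v, mul_pos (mul_pos hδ.1 (Real.exp_pos (c * (0 - t)))) (hpos v hv)])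
      (fun u hu v hv heig => by
        have hβ1 : δ * Real.exp (c * (u - t)) ≤ 1 := by
          have : Real.exp (c * (u - t)) ≤ 1 := Real.exp_le_one_iff.2
            (mul_nonpos_of_nonneg_of_nonpos (by positivity) (by linarith [hu.2]))
          nlinarith [hδ.1, hδ.2]
        have hβ0 : 0 < δ * Real.exp (c * (u - t)) := mul_pos hδ.1 (Real.exp_pos _)
        have hKc : 0 < c - K := by linarith [le_abs_self K]
        nlinarith [hK u hu _ v hβ0 hβ1 heig, mul_pos (mul_pos hKc hβ0) (hpos v hv)])
    simpa using hbarrier t ⟨ht, le_rfl⟩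
  intro v
  refine ge_of_tendsto (tendsto_nhdsWithin_of_tendsto_nhds (s := Ioi 0)
    ((continuous_mul_const (v ⬝ᵥ v)).tendsto' 0 0 (zero_mul _))) ?_
  filter_upwards [Ioo_mem_nhdsGT zero_lt_one] with δ hδ using hsmall δ hδ v

section Riccati

variable {k : Type*} [Fintype k]

theorem Matrix.riccati_sub_eq {R : Type*} [CommRing R] {A M₀ Q N : Matrix n n R}
    {B : Matrix n k R} (hM₀ : M₀ᵀ = M₀) (hARE : Aᵀ * M₀ + M₀ * A + M₀ * B * Bᵀ * M₀ + N = 0) :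
    Aᵀ * Q + Q * A + Q * B * Bᵀ * Q + N =
      (A + B * Bᵀ * M₀)ᵀ * (Q - M₀) + (Q - M₀) * (A + B * Bᵀ * M₀) +
        (Q - M₀) * B * Bᵀ * (Q - M₀) := by
  rw [eq_neg_of_add_eq_zero_right hARE, transpose_add, transpose_mul, transpose_mul,
    transpose_transpose, hM₀]
  simp only [Matrix.mul_assoc _ B Bᵀ]
  generalize B * Bᵀ = S
  noncomm_ring

theorem Matrix.dotProduct_riccati_mulVec_le {F D : Matrix n n ℝ} {B : Matrix n k ℝ}
    (hD : Dᵀ = D) {μ : ℝ} (hμ : 0 < μ) (hμ1 : μ ≤ 1) {v : n → ℝ} (hv : D *ᵥ v = μ • v) :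
    v ⬝ᵥ (Fᵀ * D + D * F + D * B * Bᵀ * D) *ᵥ v ≤
      (∑ i, ∑ j, |(Fᵀ + F) i j| + ∑ i, ∑ j, |(B * Bᵀ) i j|) * μ * (v ⬝ᵥ v) := by
  have hvD : v ᵥ* D = μ • v := by rw [← hD, vecMul_transpose, hv]
  have heval : v ⬝ᵥ (Fᵀ * D + D * F + D * B * Bᵀ * D) *ᵥ v =
      μ * (v ⬝ᵥ (Fᵀ + F) *ᵥ v) + μ ^ 2 * (v ⬝ᵥ (B * Bᵀ) *ᵥ v) := by
    rw [Matrix.mul_assoc D B, add_mulVec, add_mulVec, add_mulVec, ← mulVec_mulVec,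
      ← mulVec_mulVec, ← mulVec_mulVec, ← mulVec_mulVec, hv, mulVec_smul, mulVec_smul,
      dotProduct_add, dotProduct_add, dotProduct_mulVec v D, dotProduct_mulVec v D, hvD]
    simp only [dotProduct_smul, smul_dotProduct, smul_eq_mul, dotProduct_add]
    ring
  have hS : 0 ≤ v ⬝ᵥ (B * Bᵀ) *ᵥ v := by
    simpa [conjTranspose_eq_transpose_of_trivial] using
      (posSemidef_self_mul_conjTranspose B).dotProduct_mulVec_nonneg v
  rw [heval]
  nlinarith [dotProduct_mulVec_le_sum_abs_mul (Fᵀ + F) v,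
    dotProduct_mulVec_le_sum_abs_mul (B * Bᵀ) v, mul_le_mul_of_nonneg_right hμ1 hS]

end Riccati

end QuadraticForm

theorem riccati_upper_bound_by_ARE_general {n m p : ℕ} (T : ℝ)
    (A : Matrix (Fin n) (Fin n) ℝ) (B : Matrix (Fin n) (Fin m) ℝ)
    (C : Matrix (Fin p) (Fin n) ℝ) (M M₀ : Matrix (Fin n) (Fin n) ℝ)
    (hM₀ : M₀ᵀ = M₀)
    (hARE : 0 = Aᵀ * M₀ + M₀ * A + M₀ * B * Bᵀ * M₀ + Cᵀ * C)
    (hMM₀ : (-(M - M₀)).PosDef)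
    (Q11 : ℝ → Matrix (Fin n) (Fin n) ℝ)
    (hQ11sym : ∀ t, (Q11 t)ᵀ = Q11 t)
    (h11 : ∀ t ∈ Set.Ico (0:ℝ) T, ∀ i j, HasDerivAt (fun s => Q11 s i j)
      ((Aᵀ * Q11 t + Q11 t * A + Q11 t * B * Bᵀ * Q11 t + Cᵀ * C) i j) t)
    (h110 : Q11 0 = M) :
    ∀ t ∈ Set.Ico (0:ℝ) T, (-(Q11 t - M₀)).PosSemidef := by
  intro t ht
  set F := A + B * Bᵀ * M₀
  have hsym : ∀ u, (Q11 u - M₀)ᵀ = Q11 u - M₀ := fun u => by rw [transpose_sub, hQ11sym, hM₀]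
  refine neg_posSemidef_of_hasDerivAt (D := fun u => Q11 u - M₀)
    (D' := fun u => Fᵀ * (Q11 u - M₀) + (Q11 u - M₀) * F + (Q11 u - M₀) * B * Bᵀ * (Q11 u - M₀))
    (∑ i, ∑ j, |(Fᵀ + F) i j| + ∑ i, ∑ j, |(B * Bᵀ) i j|) ht.1 (fun u _ => hsym u)
    (fun u hu i j => ?_)
    (fun u _ μ v hμ hμ1 hv => dotProduct_riccati_mulVec_le (hsym u) hμ hμ1 hv)
    (by rw [h110]; exact hMM₀.posSemidef)
  rw [← riccati_sub_eq hM₀ hARE.symm]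
  exact (h11 u ⟨hu.1, hu.2.trans_lt ht.2⟩ i j).sub_const _

/-- If `M₀` solves the algebraic Riccati equation and `M − M₀ ≺ 0`, then the
Riccati solution `Q¹¹` with `Q¹¹₀ = M` satisfies `Q¹¹_t − M₀ ⪯ 0` on `[0,T)`. -/
theorem riccati_upper_bound_by_ARE {n m p : ℕ} (T : ℝ) (hT : 0 < T)
    (A : Matrix (Fin n) (Fin n) ℝ) (B : Matrix (Fin n) (Fin m) ℝ)
    (C : Matrix (Fin p) (Fin n) ℝ) (M M₀ : Matrix (Fin n) (Fin n) ℝ)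
    (hM : Mᵀ = M) (hM₀ : M₀ᵀ = M₀)
    (hARE : 0 = Aᵀ * M₀ + M₀ * A + M₀ * B * Bᵀ * M₀ + Cᵀ * C)
    (hMM₀ : (-(M - M₀)).PosDef)
    (Q11 : ℝ → Matrix (Fin n) (Fin n) ℝ)
    (hQ11sym : ∀ t, (Q11 t)ᵀ = Q11 t)
    (h11 : ∀ t ∈ Set.Ico (0:ℝ) T, ∀ i j, HasDerivAt (fun s => Q11 s i j)
      ((Aᵀ * Q11 t + Q11 t * A + Q11 t * B * Bᵀ * Q11 t + Cᵀ * C) i j) t)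
    (h110 : Q11 0 = M) :
    ∀ t ∈ Set.Ico (0:ℝ) T, (-(Q11 t - M₀)).PosSemidef :=
  riccati_upper_bound_by_ARE_general T A B C M M₀ hM₀ hARE hMM₀ Q11 hQ11sym h11 h110
end
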